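/- arXiv:2310.11373 — 3 statements merged into one kernel-verified Lean document; each statement's English description precedes it below -/
import Mathlib

section
/- Under the getShardIndex assignment, every control shard contains at least N_c nodes and every process shard contains at least N_p nodes; moreover when N_c ∣ N and N_p ∣ N, every control shard has exactly N_c nodes and every process shard exactly N_p nodes, and there are exactly N/N_c control shards and N/N_p process shards. -/
/-- The process shard index of node `c` in the getShardIndex assignment. -/
def index1 (N Np c : ℕ) : ℕ := min (c / Np) (N / Np - 1)

/-- The control shard index of node `c` in the getShardIndex assignment. -/
def index2 (N Np Nc c : ℕ) : ℕ := min (index1 N Np c / (Nc / Np)) (N / Nc - 1)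

/-- The set of nodes assigned to process shard `i`. -/
def processShard (N Np i : ℕ) : Finset ℕ := (Finset.range N).filter (fun c => index1 N Np c = i)

/-- The set of nodes assigned to control shard `j`. -/
def controlShard (N Np Nc j : ℕ) : Finset ℕ :=
  (Finset.range N).filter (fun c => index2 N Np Nc c = j)

/-!
`index1 N d c = min (c / d) (N / d - 1)` cuts `0, …, N - 1` into the blocks
`[j * d, j * d + d)` for `j < N / d`, the `N % d` overflow nodes joining the last block.
Since `Np ∣ Nc`, dividing the process index by `Nc / Np` gives exactly `index1 N Nc`, so
control shards are the same construction with block size `Nc`. A block with `j < N / d`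
always lies in shard `j`, and when `d ∣ N` there is no overflow, so it is the whole shard.
-/

open Finset

theorem Nat.div_sub_one_le_sub_one_div (a k : ℕ) : a / k - 1 ≤ (a - 1) / k := by
  rcases k.eq_zero_or_pos with rfl | hk
  · simp
  · calc a / k - 1 = (a - k * 1) / k := (Nat.sub_mul_div a k 1).symm
      _ ≤ (a - 1) / k := Nat.div_le_div_right (by omega)

theorem index2_eq_index1 {N Np Nc : ℕ} (hdvd : Np ∣ Nc) (c : ℕ) :
    index2 N Np Nc c = index1 N Nc c := by
  obtain ⟨k, rfl⟩ := hdvd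
  rcases Np.eq_zero_or_pos with rfl | hNp
  · simp [index1, index2]
  have hmono : Monotone (· / k) := fun _ _ h => Nat.div_le_div_right h
  rw [index2, index1, index1, Nat.mul_div_cancel_left k hNp, hmono.map_min,
    Nat.div_div_eq_div_mul, min_assoc, ← Nat.div_div_eq_div_mul N,
    min_eq_right (Nat.div_sub_one_le_sub_one_div (N / Np) k)]

theorem controlShard_eq_processShard {N Np Nc : ℕ} (hdvd : Np ∣ Nc) (j : ℕ) :
    controlShard N Np Nc j = processShard N Nc j := by
  simp only [controlShard, processShard, index2_eq_index1 hdvd]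

section Blocks

variable {N d j : ℕ}

theorem mem_processShard {c : ℕ} : c ∈ processShard N d j ↔ c < N ∧ index1 N d c = j := by
  rw [processShard, mem_filter, mem_range]

theorem Ico_subset_processShard (hj : j < N / d) :
    Ico (j * d) (j * d + d) ⊆ processShard N d j := by
  have hd : 0 < d := Nat.pos_of_ne_zero fun h => by simp [h] at hj
  intro c hc
  rw [mem_Ico] at hc
  have hcd : c / d = j := Nat.div_eq_of_lt_le hc.1 (by rw [add_one_mul]; exact hc.2)
  have hcN : c < N := calc
    c < (j + 1) * d := by rw [add_one_mul]; exact hc.2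
    _ ≤ N / d * d := Nat.mul_le_mul_right d hj
    _ ≤ N := Nat.div_mul_le_self N d
  refine mem_processShard.2 ⟨hcN, ?_⟩
  rw [index1, hcd]
  exact min_eq_left (by omega)

theorem processShard_subset_Ico (hdvd : d ∣ N) :
    processShard N d j ⊆ Ico (j * d) (j * d + d) := by
  intro c hc
  obtain ⟨hcN, hcj⟩ := mem_processShard.1 hc
  have hd : 0 < d := Nat.pos_of_dvd_of_pos hdvd (by omega)
  have hlt : c / d < N / d := Nat.div_lt_div_of_lt_of_dvd hdvd hcN
  rw [index1, min_eq_left (by omega)] at hcj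
  subst hcj
  exact mem_Ico.2 ⟨Nat.div_mul_le_self c d, Nat.lt_div_mul_add hd⟩

theorem processShard_eq_Ico (hdvd : d ∣ N) (hj : j < N / d) :
    processShard N d j = Ico (j * d) (j * d + d) :=
  (processShard_subset_Ico hdvd).antisymm (Ico_subset_processShard hj)

theorem le_card_processShard (hj : j < N / d) : d ≤ (processShard N d j).card := by
  simpa using card_le_card (Ico_subset_processShard hj)

theorem card_processShard (hdvd : d ∣ N) (hj : j < N / d) : (processShard N d j).card = d := by
  simp [processShard_eq_Ico hdvd hj]

theorem image_index1_range (hdvd : d ∣ N) : (range N).image (index1 N d) = range (N / d) := by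
  ext j
  simp only [mem_image, mem_range]
  constructor
  · rintro ⟨c, hcN, rfl⟩
    exact (min_le_left _ _).trans_lt (Nat.div_lt_div_of_lt_of_dvd hdvd hcN)
  · intro hj
    have hd : 0 < d := Nat.pos_of_ne_zero fun h => by simp [h] at hj
    exact ⟨j * d, mem_processShard.1 (Ico_subset_processShard hj (left_mem_Ico.2 (by omega)))⟩

end Blocks

theorem shard_sizes_general (N Np Nc : ℕ) (hdvd : Np ∣ Nc) :
    (∀ i, i < N / Np → Np ≤ (processShard N Np i).card) ∧
    (∀ j, j < N / Nc → Nc ≤ (controlShard N Np Nc j).card) ∧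
    (Np ∣ N → Nc ∣ N →
      (∀ i, i < N / Np → (processShard N Np i).card = Np) ∧
      (∀ j, j < N / Nc → (controlShard N Np Nc j).card = Nc) ∧
      ((Finset.range N).image (fun c => index1 N Np c)).card = N / Np ∧
      ((Finset.range N).image (fun c => index2 N Np Nc c)).card = N / Nc) := by
  simp only [controlShard_eq_processShard hdvd, index2_eq_index1 hdvd]
  refine ⟨fun i => le_card_processShard, fun j => le_card_processShard, fun hNpN hNcN => ?_⟩
  exact ⟨fun i => card_processShard hNpN, fun j => card_processShard hNcN,
    by simp [image_index1_range hNpN], by simp [image_index1_range hNcN]⟩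

/-- Every control shard has at least `N_c` nodes and every process shard at
least `N_p` nodes; when `N_c ∣ N` and `N_p ∣ N` these cardinalities are exact and there
are exactly `N/N_c` control shards and `N/N_p` process shards. -/
theorem shard_sizes (N Np Nc : ℕ) (hNp : 0 < Np) (hdvd : Np ∣ Nc) (hNc0 : 0 < Nc)
    (hNc : Nc ≤ N) :
    (∀ i, i < N / Np → Np ≤ (processShard N Np i).card) ∧
    (∀ j, j < N / Nc → Nc ≤ (controlShard N Np Nc j).card) ∧
    (Np ∣ N → Nc ∣ N →
      (∀ i, i < N / Np → (processShard N Np i).card = Np) ∧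
      (∀ j, j < N / Nc → (controlShard N Np Nc j).card = Nc) ∧
      ((Finset.range N).image (fun c => index1 N Np c)).card = N / Np ∧
      ((Finset.range N).image (fun c => index2 N Np Nc c)).card = N / Nc) :=
  shard_sizes_general N Np Nc hdvd
end

section
/- In a partially synchronous model, a shard tolerating an L-fraction of liveness attackers can accept a block only with at least (1 - 2L)·M favorable honest-distinguishable votes; hence the safety threshold satisfies S < 1 - 2L, while in the synchronous model S < 1 - L. In both cases, if additionally L ≤ S, then L < 1/3 (partially synchronous) and L < 1/2 (synchronous) respectively. -/
/-! Dividing the vote counts by `M` turns the quorum bound into `S < 1 - 2L` (partially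
synchronous) and `S < 1 - L` (synchronous); together with `L ≤ S` these give `3L < 1` and
`2L < 1`. -/

lemma lt_one_sub_add_one_mul_of_mul_lt_quorum_sub {M L S q a : ℝ} (hM : 0 < M)
    (hq : q ≤ M - L * M) (h : S * M < q - a * L * M) : S < 1 - (a + 1) * L := by
  refine lt_of_mul_lt_mul_right ?_ hM.le
  calc S * M < q - a * L * M := h
    _ ≤ M - L * M - a * L * M := by linarith
    _ = (1 - (a + 1) * L) * M := by ring

theorem safety_liveness_bounds_general (M : ℕ) (hM : 0 < M) (L S q : ℝ)
    (hq : q ≤ (M : ℝ) - L * M) :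
    (S * M < q - L * M → S < 1 - 2 * L ∧ (L ≤ S → L < 1/3)) ∧
    (S * M < q → S < 1 - L ∧ (L ≤ S → L < 1/2)) := by
  have hMpos : (0 : ℝ) < M := by exact_mod_cast hM
  refine ⟨fun h => ?_, fun h => ?_⟩
  · have hS := lt_one_sub_add_one_mul_of_mul_lt_quorum_sub (a := 1) hMpos hq (by linarith)
    exact ⟨by linarith, fun hLS => by linarith⟩
  · have hS := lt_one_sub_add_one_mul_of_mul_lt_quorum_sub (a := 0) hMpos hq (by linarith)
    exact ⟨by linarith, fun hLS => by linarith⟩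

/-- With quorum `q ≤ M - L·M`: in the partially synchronous model
(`S·M < q - L·M`) the safety threshold satisfies `S < 1 - 2L`, and if moreover `L ≤ S`
then `L < 1/3`; in the synchronous model (`S·M < q`) we get `S < 1 - L`, and if `L ≤ S`
then `L < 1/2`. -/
theorem safety_liveness_bounds (M : ℕ) (hM : 0 < M) (L S q : ℝ)
    (hL0 : 0 ≤ L) (hL1 : L < 1) (hS0 : 0 ≤ S) (hS1 : S < 1)
    (hq : q ≤ (M : ℝ) - L * M) :
    (S * M < q - L * M → S < 1 - 2 * L ∧ (L ≤ S → L < 1/3)) ∧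
    (S * M < q → S < 1 - L ∧ (L ≤ S → L < 1/2)) :=
  safety_liveness_bounds_general M hM L S q hq
end

section
/- Suicidal attack bound: if the adversary controls a nodes in a process shard and each adversarial node that is silent twice within τ epochs is expelled at the epoch following its second silence, then the adversary can cause the process shard to fail unanimity for at most 2a consecutive epochs before all a adversarial nodes are expelled; after at most 2a epochs the shard reaches unanimity in every subsequent epoch. -/
/-!
Charge every failed epoch `t` to a pair `(k, j)`: a non-expelled node `k` silent at `t`, and the
number `j < 2` of its earlier silences. The charge is injective, since a later silence of the
same node has strictly more earlier silences; hence at most `2a` epochs fail, whichever epochs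
they are. In particular `2a` failed epochs followed by one more would be `2a + 1` failures.
-/

open Finset

section

variable {ι : Type*} (silent : ι → ℕ → Bool)

def priorSilences (k : ι) (t : ℕ) : ℕ :=
  ((Finset.range t).filter (fun t' => silent k t' = true)).card

/-- A node counts as expelled once it has been silent `c` times (`c = 2` in the theorem). -/
def IsFailedEpoch (c t : ℕ) : Prop :=
  ∃ k, silent k t = true ∧ priorSilences silent k t < c

theorem priorSilences_strictMonoOn (k : ι) :
    StrictMonoOn (priorSilences silent k) {t | silent k t = true} := by
  intro s hs t _ hst
  refine card_lt_card ((ssubset_iff_of_subset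
    (filter_subset_filter _ (range_subset_range.2 hst.le))).2 ⟨s, ?_, ?_⟩)
  · exact mem_filter.2 ⟨mem_range.2 hst, hs⟩
  · simp

theorem card_filter_silent_priorSilences_lt_le (k : ι) (c : ℕ) (S : Finset ℕ) :
    #{t ∈ S | silent k t = true ∧ priorSilences silent k t < c} ≤ c := by
  simpa using card_le_card_of_injOn (t := range c) (priorSilences silent k)
    (fun t ht => mem_range.2 (mem_filter.1 ht).2.2)
    ((priorSilences_strictMonoOn silent k).injOn.mono fun t ht => (mem_filter.1 ht).2.1)

theorem card_le_of_forall_isFailedEpoch [Fintype ι] (c : ℕ) (S : Finset ℕ)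
    (hS : ∀ t ∈ S, IsFailedEpoch silent c t) : #S ≤ c * Fintype.card ι := by
  calc #S ≤ #(univ.biUnion fun k => {t ∈ S | silent k t = true ∧ priorSilences silent k t < c}) :=
        card_le_card fun t ht => by
          obtain ⟨k, hk⟩ := hS t ht
          exact mem_biUnion.2 ⟨k, mem_univ k, mem_filter.2 ⟨ht, hk⟩⟩
    _ ≤ #(univ : Finset ι) * c := card_biUnion_le_card_mul _ _ _ fun k _ =>
        card_filter_silent_priorSilences_lt_le silent k c S
    _ = c * Fintype.card ι := by rw [card_univ, mul_comm]

end

/-- Suicidal attack bound: an epoch `t` fails iff some not-yet-expelled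
adversarial node (fewer than 2 earlier silences) is silent at `t`. Then at most `2a`
epochs fail in total, any run of consecutive failed epochs from epoch 0 has length at
most `2a`, and if the first `2a` epochs all failed then no later epoch fails. -/
theorem suicidal_attack_bound (a : ℕ) (silent : Fin a → ℕ → Bool) :
    (∀ T : ℕ,
      ((Finset.range T).filter (fun t => ∃ k : Fin a, silent k t = true ∧
        ((Finset.range t).filter (fun t' => silent k t' = true)).card < 2)).card ≤ 2 * a) ∧
    (∀ m : ℕ, (∀ t < m, ∃ k : Fin a, silent k t = true ∧
        ((Finset.range t).filter (fun t' => silent k t' = true)).card < 2) → m ≤ 2 * a) ∧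
    ((∀ t < 2 * a, ∃ k : Fin a, silent k t = true ∧
        ((Finset.range t).filter (fun t' => silent k t' = true)).card < 2) →
      ∀ t, 2 * a ≤ t → ¬ ∃ k : Fin a, silent k t = true ∧
        ((Finset.range t).filter (fun t' => silent k t' = true)).card < 2) := by
  have hbound (S : Finset ℕ) (hS : ∀ t ∈ S, IsFailedEpoch silent 2 t) : #S ≤ 2 * a := by
    simpa using card_le_of_forall_isFailedEpoch silent 2 S hS
  refine ⟨fun T => hbound _ fun t ht => (mem_filter.1 ht).2, fun m hm => ?_,
    fun hall t ht hfail => ?_⟩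
  · simpa using hbound (range m) fun t ht => hm t (mem_range.1 ht)
  · have hnotMem : t ∉ range (2 * a) := by simpa using ht
    have hcard := hbound (insert t (range (2 * a))) fun s hs => by
      rcases mem_insert.1 hs with rfl | hs
      exacts [hfail, hall s (mem_range.1 hs)]
    rw [card_insert_of_notMem hnotMem, card_range] at hcard
    omega
end
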